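/- arXiv:1601.03200 — 8 statements merged into one kernel-verified Lean document; each statement's English description precedes it below -/
import Mathlib

section
/- If (X,d) is a complete metric space and f₁,...,fₙ are Banach contractions of X, then there exists a unique nonempty compact set A ⊆ X such that A = f₁(A) ∪ ... ∪ fₙ(A), and for every nonempty compact K ⊆ X the iterates F^k(K) of the map F(K) := f₁(K) ∪ ... ∪ fₙ(K) converge to A in the Hausdorff metric. -/
/-!
Each `fᵢ` maps nonempty compact sets to nonempty compact sets with Lipschitz constant `r i` for
the Hausdorff distance, and the Hausdorff distance of two unions is at most the largest distance
of corresponding pieces. Hence `F` is a contraction of `K(X)`, with constant `max r i < 1`.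
Since `K(X)` is complete when `X` is, the Banach fixed point theorem gives the attractor, its
uniqueness, and the convergence of every orbit.
-/

open TopologicalSpace Filter Metric Set

namespace TopologicalSpace.NonemptyCompacts

variable {α β : Type*} [EMetricSpace α] [EMetricSpace β]

theorem lipschitzWith_map {f : α → β} {K : NNReal} (hf : LipschitzWith K f) :
    LipschitzWith K (NonemptyCompacts.map f hf.continuous) := by
  intro s t
  change hausdorffEDist (f '' s) (f '' t) ≤ K * hausdorffEDist (s : Set α) t
  have close : ∀ u v : NonemptyCompacts α, ∀ x ∈ (u : Set α),
      ∃ y ∈ (v : Set α), edist (f x) (f y) ≤ K * hausdorffEDist (u : Set α) v := by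
    intro u v x hx
    obtain ⟨y, hy, hxy⟩ := v.isCompact.exists_infEDist_eq_edist v.nonempty x
    refine ⟨y, hy, (hf.edist_le_mul x y).trans ?_⟩
    gcongr
    exact hxy ▸ infEDist_le_hausdorffEDist_of_mem hx
  apply hausdorffEDist_le_of_mem_edist
  · rintro _ ⟨x, hx, rfl⟩
    obtain ⟨y, hy, hxy⟩ := close s t x hx
    exact ⟨f y, mem_image_of_mem f hy, hxy⟩
  · rintro _ ⟨x, hx, rfl⟩
    obtain ⟨y, hy, hxy⟩ := close t s x hx
    exact ⟨f y, mem_image_of_mem f hy, hausdorffEDist_comm (s := (t : Set α)) ▸ hxy⟩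

variable {ι : Type*} [Finite ι] [Nonempty ι]

def hutchinson (f : ι → α → α) (hf : ∀ i, Continuous (f i)) (K : NonemptyCompacts α) :
    NonemptyCompacts α :=
  ⟨⟨⋃ i, f i '' K, isCompact_iUnion fun i => K.isCompact.image (hf i)⟩,
    (K.nonempty.image (f (Classical.arbitrary ι))).mono (subset_iUnion (fun i => f i '' K) _)⟩

theorem lipschitzWith_hutchinson {f : ι → α → α} {c : NNReal}
    (hf : ∀ i, LipschitzWith c (f i)) :
    LipschitzWith c (hutchinson f fun i => (hf i).continuous) := fun K L =>
  (hausdorffEDist_iUnion_le).trans <| iSup_le fun i => lipschitzWith_map (hf i) K L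

end TopologicalSpace.NonemptyCompacts

/-- Hutchinson–Barnsley theorem: an IFS of Banach contractions on a complete
metric space has a unique attractor, and iterates of the Hutchinson operator
starting from any nonempty compact set converge to it in the Hausdorff metric. -/
theorem stmt0 {X : Type*} [MetricSpace X] [CompleteSpace X] [Nonempty X]
    {n : ℕ} (hn : 0 < n) (f : Fin n → X → X) (r : Fin n → NNReal)
    (hr : ∀ i, r i < 1) (hf : ∀ i, LipschitzWith (r i) (f i)) :
    ∃ A : NonemptyCompacts X,
      ((A : Set X) = ⋃ i, f i '' (A : Set X)) ∧
      (∀ B : NonemptyCompacts X, ((B : Set X) = ⋃ i, f i '' (B : Set X)) → B = A) ∧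
      (∀ K : NonemptyCompacts X, ∀ S : ℕ → NonemptyCompacts X, S 0 = K →
        (∀ k, (S (k + 1) : Set X) = ⋃ i, f i '' (S k : Set X)) →
        Tendsto S atTop (nhds A)) := by
  have : Nonempty (Fin n) := ⟨⟨0, hn⟩⟩
  have hfc : ∀ i, LipschitzWith (Finset.univ.sup r) (f i) := fun i =>
    (hf i).weaken (Finset.le_sup (Finset.mem_univ i))
  set F := NonemptyCompacts.hutchinson f fun i => (hfc i).continuous
  have hF : ContractingWith (Finset.univ.sup r) F :=
    ⟨(Finset.sup_lt_iff zero_lt_one).2 fun i _ => hr i,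
      NonemptyCompacts.lipschitzWith_hutchinson hfc⟩
  refine ⟨hF.fixedPoint F, (congrArg SetLike.coe hF.fixedPoint_isFixedPt).symm,
    fun B hB => hF.fixedPoint_unique (SetLike.coe_injective hB.symm), fun K S hS0 hS => ?_⟩
  have hSF : ∀ k, S k = F^[k] K := by
    intro k
    induction k with
    | zero => exact hS0
    | succ k ih =>
      rw [Function.iterate_succ_apply', ← ih]
      exact SetLike.coe_injective (hS k)
  exact (hF.tendsto_iterate_fixedPoint K).congr fun k => (hSF k).symm
end

section
/- If φ : [0,∞) → [0,∞) is nondecreasing and f : X^m → X satisfies d(f(x), f(y)) ≤ φ(d_m(x,y)) for all x,y ∈ X^m, and φ^(k)(t) → 0 for every t > 0, then f is continuous. -/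
/-!
Monotonicity of `φ` together with `φ^[k] t → 0` forces `φ t < t` for `t > 0`: otherwise the orbit
of `t` would stay above `t`. Hence `d(f x, f y) ≤ d(x, y)` whenever `x ≠ y`, so `f` is
`1`-Lipschitz.
-/

open Filter Topology

theorem MonotoneOn.le_iterate_apply_of_le_apply {α : Type*} [Preorder α] {φ : α → α} {t : α}
    (hφ : MonotoneOn φ (Set.Ici t)) (h : t ≤ φ t) (k : ℕ) : t ≤ φ^[k] t := by
  induction k with
  | zero => exact le_rfl
  | succ k ih =>
    rw [Function.iterate_succ_apply']
    exact h.trans (hφ Set.self_mem_Ici ih ih)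

theorem MonotoneOn.apply_lt_self_of_tendsto_iterate_zero {φ : ℝ → ℝ}
    (hφ : MonotoneOn φ (Set.Ici 0)) {t : ℝ} (ht : 0 < t)
    (hlim : Tendsto (fun k => φ^[k] t) atTop (𝓝 0)) : φ t < t := by
  by_contra! h
  have horbit := (hφ.mono (Set.Ici_subset_Ici.mpr ht.le)).le_iterate_apply_of_le_apply h
  linarith [ge_of_tendsto' hlim horbit]

theorem lipschitzWith_one_of_dist_le_apply {α β : Type*} [MetricSpace α] [PseudoMetricSpace β]
    {f : α → β} {φ : ℝ → ℝ} (hφ : ∀ t > 0, φ t ≤ t)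
    (hf : ∀ x y, dist (f x) (f y) ≤ φ (dist x y)) : LipschitzWith 1 f := by
  refine LipschitzWith.of_dist_le_mul fun x y => ?_
  rw [NNReal.coe_one, one_mul]
  rcases eq_or_ne x y with rfl | hxy
  · simp
  · exact (hf x y).trans (hφ _ (dist_pos.mpr hxy))

theorem stmt2_general {X : Type*} [MetricSpace X] {m : ℕ}
    (φ : ℝ → ℝ) (hφ_mono : MonotoneOn φ (Set.Ici 0))
    (hφ_iter : ∀ t > 0, Tendsto (fun k => φ^[k] t) atTop (nhds 0))
    (f : (Fin m → X) → X)
    (hf : ∀ x y : Fin m → X, dist (f x) (f y) ≤ φ (dist x y)) :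
    Continuous f :=
  (lipschitzWith_one_of_dist_le_apply
    (fun t ht => (hφ_mono.apply_lt_self_of_tendsto_iterate_zero ht (hφ_iter t ht)).le)
    hf).continuous

/-- A generalized Matkowski contraction `f : X^m → X` (with the maximum metric on
`X^m`, which is the product metric on `Fin m → X`) is continuous. -/
theorem stmt2 {X : Type*} [MetricSpace X] {m : ℕ}
    (φ : ℝ → ℝ) (hφ_mono : MonotoneOn φ (Set.Ici 0))
    (hφ_nonneg : ∀ t, 0 ≤ t → 0 ≤ φ t)
    (hφ_iter : ∀ t > 0, Tendsto (fun k => φ^[k] t) atTop (nhds 0))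
    (f : (Fin m → X) → X)
    (hf : ∀ x y : Fin m → X, dist (f x) (f y) ≤ φ (dist x y)) :
    Continuous f :=
  stmt2_general φ hφ_mono hφ_iter f hf
end

section
/- Let X be a complete metric space and F = {f₁,...,fₙ} a family of generalized Matkowski contractions of order m (a GIFS). Then there exists a unique nonempty compact set A ⊆ X such that A = f₁(A × ... × A) ∪ ... ∪ fₙ(A × ... × A). -/
/-! A map `F` with `dist (F x) (F y) ≤ φ (dist x y)`, where `φ` is monotone and
`φ^[k] t → 0`, satisfies `φ t < t` for `t > 0`. This makes every orbit Cauchy: once a step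
`dist (F y) y` is below `ε - φ ε`, the orbit of `y` stays in the ball of radius `ε` about `y`.
Hence `F` has a unique fixed point in a nonempty complete space. The Hutchinson operator
`A ↦ ⋃ i, fᵢ(A × ⋯ × A)` is such a map, with the same `φ`, on the complete space of nonempty
compact sets with the Hausdorff metric: every `m`-tuple of points of `A` lies within `dist A B`
of an `m`-tuple of points of `B` in the maximum metric. -/

open TopologicalSpace Filter Function Metric

section Matkowski

variable {φ : ℝ → ℝ}

theorem lt_self_of_tendsto_iterate (hφ_mono : MonotoneOn φ (Set.Ici 0))
    (hφ_iter : ∀ t > 0, Tendsto (fun k => φ^[k] t) atTop (nhds 0)) {t : ℝ} (ht : 0 < t) :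
    φ t < t := by
  by_contra! h
  have hle : ∀ k, t ≤ φ^[k] t := by
    intro k
    induction k with
    | zero => rfl
    | succ k ih =>
      rw [iterate_succ_apply']
      exact h.trans (hφ_mono ht.le (ht.le.trans ih) ih)
  linarith [ge_of_tendsto (hφ_iter t ht) (Eventually.of_forall hle)]

theorem lipschitzWith_one_of_dist_le_matkowski {Y Z : Type*} [MetricSpace Y]
    [PseudoMetricSpace Z] {g : Y → Z} (hlt : ∀ t > 0, φ t < t)
    (hg : ∀ x y, dist (g x) (g y) ≤ φ (dist x y)) : LipschitzWith 1 g := by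
  refine LipschitzWith.of_dist_le_mul fun x y => ?_
  rcases eq_or_ne x y with rfl | hxy
  · simp
  · simpa using (hg x y).trans (hlt _ (dist_pos.2 hxy)).le

variable {Y : Type*} [MetricSpace Y] {F : Y → Y}

theorem dist_iterate_succ_le (hφ_mono : MonotoneOn φ (Set.Ici 0))
    (hF : ∀ x y, dist (F x) (F y) ≤ φ (dist x y)) (x : Y) (k : ℕ) :
    dist (F^[k + 1] x) (F^[k] x) ≤ φ^[k] (dist (F x) x) := by
  induction k with
  | zero => simp
  | succ k ih =>
    calc dist (F^[k + 1 + 1] x) (F^[k + 1] x) = dist (F (F^[k + 1] x)) (F (F^[k] x)) := by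
          rw [iterate_succ_apply' F (k + 1), iterate_succ_apply' F k]
      _ ≤ φ (φ^[k] (dist (F x) x)) :=
          (hF _ _).trans (hφ_mono dist_nonneg (dist_nonneg.trans ih) ih)
      _ = φ^[k + 1] (dist (F x) x) := (iterate_succ_apply' φ k _).symm

theorem tendsto_dist_iterate_succ (hφ_mono : MonotoneOn φ (Set.Ici 0))
    (hφ_iter : ∀ t > 0, Tendsto (fun k => φ^[k] t) atTop (nhds 0))
    (hF : ∀ x y, dist (F x) (F y) ≤ φ (dist x y)) (x : Y) :
    Tendsto (fun k => dist (F^[k + 1] x) (F^[k] x)) atTop (nhds 0) := by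
  rcases eq_or_ne (F x) x with hfix | hmove
  · simp [iterate_fixed hfix]
  · exact squeeze_zero (fun _ => dist_nonneg) (dist_iterate_succ_le hφ_mono hF x)
      (hφ_iter _ (dist_pos.2 hmove))

theorem dist_iterate_lt_of_dist_lt (hφ_mono : MonotoneOn φ (Set.Ici 0))
    (hF : ∀ x y, dist (F x) (F y) ≤ φ (dist x y)) {ε : ℝ} (hε : 0 < ε) {y : Y}
    (hy : dist (F y) y < ε - φ ε) (j : ℕ) : dist (F^[j] y) y < ε := by
  induction j with
  | zero => simpa using hε
  | succ j ih =>
    calc dist (F^[j + 1] y) y ≤ dist (F (F^[j] y)) (F y) + dist (F y) y := by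
          rw [iterate_succ_apply']
          exact dist_triangle _ _ _
      _ ≤ φ ε + dist (F y) y := by
          gcongr
          exact (hF _ _).trans (hφ_mono dist_nonneg hε.le ih.le)
      _ < ε := by linarith

theorem cauchySeq_iterate_of_dist_le_matkowski (hφ_mono : MonotoneOn φ (Set.Ici 0))
    (hφ_iter : ∀ t > 0, Tendsto (fun k => φ^[k] t) atTop (nhds 0))
    (hF : ∀ x y, dist (F x) (F y) ≤ φ (dist x y)) (x : Y) :
    CauchySeq fun k => F^[k] x := by
  refine Metric.cauchySeq_iff'.2 fun ε hε => ?_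
  have hgap : 0 < ε - φ ε := sub_pos.2 (lt_self_of_tendsto_iterate hφ_mono hφ_iter hε)
  obtain ⟨N, hN⟩ := ((tendsto_dist_iterate_succ hφ_mono hφ_iter hF x).eventually
    (eventually_lt_nhds hgap)).exists
  refine ⟨N, fun k hk => ?_⟩
  obtain ⟨j, rfl⟩ := Nat.exists_eq_add_of_le hk
  rw [add_comm, iterate_add_apply]
  exact dist_iterate_lt_of_dist_lt hφ_mono hF hε (by rwa [← iterate_succ_apply' F]) j

theorem eq_of_isFixedPt_of_dist_le_matkowski (hlt : ∀ t > 0, φ t < t)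
    (hF : ∀ x y, dist (F x) (F y) ≤ φ (dist x y)) {a b : Y} (ha : IsFixedPt F a)
    (hb : IsFixedPt F b) : a = b := by
  by_contra hab
  have hdist := hF a b
  rw [ha.eq, hb.eq] at hdist
  exact (hlt _ (dist_pos.2 hab)).not_ge hdist

theorem exists_unique_isFixedPt_of_dist_le_matkowski [CompleteSpace Y] [Nonempty Y]
    (hφ_mono : MonotoneOn φ (Set.Ici 0))
    (hφ_iter : ∀ t > 0, Tendsto (fun k => φ^[k] t) atTop (nhds 0))
    (hF : ∀ x y, dist (F x) (F y) ≤ φ (dist x y)) : ∃! a, IsFixedPt F a := by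
  have hlt : ∀ t > 0, φ t < t := fun _ => lt_self_of_tendsto_iterate hφ_mono hφ_iter
  obtain ⟨x⟩ := ‹Nonempty Y›
  obtain ⟨a, ha⟩ := cauchySeq_tendsto_of_complete
    (cauchySeq_iterate_of_dist_le_matkowski hφ_mono hφ_iter hF x)
  have ha_fix : IsFixedPt F a := isFixedPt_of_tendsto_iterate ha
    (lipschitzWith_one_of_dist_le_matkowski hlt hF).continuous.continuousAt
  exact ⟨a, ha_fix, fun b hb => eq_of_isFixedPt_of_dist_le_matkowski hlt hF hb ha_fix⟩

end Matkowski

theorem Metric.hausdorffDist_le_of_mem_dist_of_nonempty {α : Type*} [PseudoMetricSpace α]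
    {s t : Set α} {r : ℝ} (hs : s.Nonempty) (H1 : ∀ x ∈ s, ∃ y ∈ t, dist x y ≤ r)
    (H2 : ∀ x ∈ t, ∃ y ∈ s, dist x y ≤ r) : hausdorffDist s t ≤ r := by
  obtain ⟨x, hx⟩ := hs
  obtain ⟨y, -, hxy⟩ := H1 x hx
  exact hausdorffDist_le_of_mem_dist (dist_nonneg.trans hxy) H1 H2

namespace TopologicalSpace.NonemptyCompacts

variable {X : Type*} [MetricSpace X]

theorem exists_dist_le_dist_of_mem (A B : NonemptyCompacts X) {x : X} (hx : x ∈ A) :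
    ∃ y ∈ B, dist x y ≤ dist A B := by
  obtain ⟨y, hy, hxy⟩ := B.isCompact.exists_infDist_eq_dist B.nonempty x
  refine ⟨y, hy, hxy ▸ ?_⟩
  rw [NonemptyCompacts.dist_eq]
  exact infDist_le_hausdorffDist_of_mem hx <| hausdorffEDist_ne_top_of_nonempty_of_bounded
    A.nonempty B.nonempty A.isCompact.isBounded B.isCompact.isBounded

theorem exists_dist_le_dist_of_mem_pi {κ : Type*} [Fintype κ] (A B : NonemptyCompacts X)
    {a : κ → X} (ha : a ∈ Set.univ.pi fun _ => (A : Set X)) :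
    ∃ b ∈ Set.univ.pi fun _ => (B : Set X), dist a b ≤ dist A B := by
  choose b hb hab using fun j => exists_dist_le_dist_of_mem A B (ha j (Set.mem_univ j))
  exact ⟨b, fun j _ => hb j, (dist_pi_le_iff dist_nonneg).2 hab⟩

end TopologicalSpace.NonemptyCompacts

section Hutchinson

variable {X ι κ : Type*}

def hutchinsonSet (f : ι → (κ → X) → X) (A : Set X) : Set X :=
  ⋃ i, f i '' Set.univ.pi fun _ => A

variable {f : ι → (κ → X) → X}

theorem hutchinsonSet_nonempty [Nonempty ι] {A : Set X} (hA : A.Nonempty) :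
    (hutchinsonSet f A).Nonempty := by
  obtain ⟨i⟩ := ‹Nonempty ι›
  exact ((Set.univ_pi_nonempty_iff.2 fun _ => hA).image (f i)).mono
    (Set.subset_iUnion_of_subset i subset_rfl)

section Topology

variable [TopologicalSpace X]

theorem isCompact_hutchinsonSet [Finite ι] (hf : ∀ i, Continuous (f i)) {A : Set X}
    (hA : IsCompact A) : IsCompact (hutchinsonSet f A) :=
  isCompact_iUnion fun i => (isCompact_univ_pi fun _ => hA).image (hf i)

def hutchinson [Finite ι] [Nonempty ι] (hf : ∀ i, Continuous (f i)) (A : NonemptyCompacts X) :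
    NonemptyCompacts X :=
  ⟨⟨hutchinsonSet f A, isCompact_hutchinsonSet hf A.isCompact⟩,
    hutchinsonSet_nonempty A.nonempty⟩

end Topology

variable [MetricSpace X] [Fintype κ] {φ : ℝ → ℝ}

theorem exists_dist_le_of_mem_hutchinsonSet (hφ_mono : MonotoneOn φ (Set.Ici 0))
    (hf : ∀ i, ∀ x y, dist (f i x) (f i y) ≤ φ (dist x y)) (A B : NonemptyCompacts X) {x : X}
    (hx : x ∈ hutchinsonSet f A) : ∃ y ∈ hutchinsonSet f B, dist x y ≤ φ (dist A B) := by
  obtain ⟨i, a, ha, rfl⟩ : ∃ i, ∃ a ∈ Set.univ.pi (fun _ => (A : Set X)), f i a = x := by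
    simpa [hutchinsonSet] using hx
  obtain ⟨b, hb, hab⟩ := NonemptyCompacts.exists_dist_le_dist_of_mem_pi A B ha
  exact ⟨f i b, Set.mem_iUnion_of_mem i (Set.mem_image_of_mem _ hb),
    (hf i a b).trans (hφ_mono dist_nonneg dist_nonneg hab)⟩

theorem dist_hutchinson_le [Finite ι] [Nonempty ι] (hφ_mono : MonotoneOn φ (Set.Ici 0))
    (hf : ∀ i, ∀ x y, dist (f i x) (f i y) ≤ φ (dist x y))
    (hf_cont : ∀ i, Continuous (f i)) (A B : NonemptyCompacts X) :
    dist (hutchinson hf_cont A) (hutchinson hf_cont B) ≤ φ (dist A B) := by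
  rw [NonemptyCompacts.dist_eq]
  refine hausdorffDist_le_of_mem_dist_of_nonempty (hutchinson hf_cont A).nonempty
    (fun x hx => exists_dist_le_of_mem_hutchinsonSet hφ_mono hf A B hx) fun x hx => ?_
  obtain ⟨y, hy, hxy⟩ := exists_dist_le_of_mem_hutchinsonSet hφ_mono hf B A hx
  exact ⟨y, hy, dist_comm B A ▸ hxy⟩

end Hutchinson

theorem stmt3_general {X : Type*} [MetricSpace X] [CompleteSpace X] [Nonempty X]
    {n m : ℕ} (hn : 0 < n)
    (φ : ℝ → ℝ) (hφ_mono : MonotoneOn φ (Set.Ici 0))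
    (hφ_iter : ∀ t > 0, Tendsto (fun k => φ^[k] t) atTop (nhds 0))
    (f : Fin n → (Fin m → X) → X)
    (hf : ∀ i, ∀ x y : Fin m → X, dist (f i x) (f i y) ≤ φ (dist x y)) :
    ∃! A : NonemptyCompacts X,
      (A : Set X) = ⋃ i, f i '' Set.pi Set.univ (fun _ : Fin m => (A : Set X)) := by
  have hlt : ∀ t > 0, φ t < t := fun _ => lt_self_of_tendsto_iterate hφ_mono hφ_iter
  have hf_cont : ∀ i, Continuous (f i) := fun i =>
    LipschitzWith.continuous (lipschitzWith_one_of_dist_le_matkowski hlt (hf i))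
  have : Nonempty (Fin n) := ⟨⟨0, hn⟩⟩
  obtain ⟨A, hA, hA_unique⟩ := exists_unique_isFixedPt_of_dist_le_matkowski hφ_mono hφ_iter
    (dist_hutchinson_le hφ_mono hf hf_cont)
  exact ⟨A, congrArg SetLike.coe hA.symm,
    fun B hB => hA_unique B (NonemptyCompacts.ext hB.symm)⟩

/-- Existence and uniqueness of the attractor of a GIFS of order `m`:
there is a unique nonempty compact `A` with `A = ⋃ i, fᵢ(A × ... × A)`. -/
theorem stmt3 {X : Type*} [MetricSpace X] [CompleteSpace X] [Nonempty X]
    {n m : ℕ} (hn : 0 < n)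
    (φ : ℝ → ℝ) (hφ_mono : MonotoneOn φ (Set.Ici 0))
    (hφ_nonneg : ∀ t, 0 ≤ t → 0 ≤ φ t)
    (hφ_iter : ∀ t > 0, Tendsto (fun k => φ^[k] t) atTop (nhds 0))
    (f : Fin n → (Fin m → X) → X)
    (hf : ∀ i, ∀ x y : Fin m → X, dist (f i x) (f i y) ≤ φ (dist x y)) :
    ∃! A : NonemptyCompacts X,
      (A : Set X) = ⋃ i, f i '' Set.pi Set.univ (fun _ : Fin m => (A : Set X)) :=
  stmt3_general hn φ hφ_mono hφ_iter f hf
end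

section
/- Let X be a complete metric space, F = {f₁,...,fₙ} a GIFS of order m with attractor A_F, and let K₀,...,K_{m-1} be nonempty compact subsets of X. Define the sequence (K_k) of nonempty compact sets by K_{k+m} := F(K_k,...,K_{k+m-1}), where F(D₀,...,D_{m-1}) := ⋃ᵢ fᵢ(D₀ × ... × D_{m-1}). Then K_k → A_F in the Hausdorff–Pompeiu metric. -/
open TopologicalSpace Filter

/-!
`F` is a `φ`-contraction for the Hausdorff distance: a point of `F(D₀, …, D_{m-1})` is the image
of a tuple whose coordinates each have a partner within `r` in `E₀, …, E_{m-1}`, and the tuple of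
partners is within `r` in the maximum metric. A Matkowski function satisfies `φ t < t` for
`t > 0`, so `d_k := dist (K_k, A)` stays below `B := d₀ + ⋯ + d_{m-1}`, and each further block of
`m` steps applies `φ` once more: `d_k ≤ φ^[p] B` for `k ≥ p m`, while `φ^[p] B → 0`.
-/

open Metric Set

section ComparisonFunction

variable {φ : ℝ → ℝ}

theorem MonotoneOn.apply_lt_self_of_tendsto_iterate (hmono : MonotoneOn φ (Ici 0))
    (hiter : ∀ t > 0, Tendsto (fun k => φ^[k] t) atTop (nhds 0)) {t : ℝ} (ht : 0 < t) :
    φ t < t := by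
  by_contra! hle
  have hle_iter : ∀ k, t ≤ φ^[k] t := by
    intro k
    induction k with
    | zero => rfl
    | succ k ih =>
      rw [Function.iterate_succ_apply']
      exact hle.trans (hmono ht.le (ht.le.trans ih) ih)
  exact (ge_of_tendsto (hiter t ht) (Eventually.of_forall hle_iter)).not_gt ht

theorem MonotoneOn.apply_le_self_of_tendsto_iterate (hmono : MonotoneOn φ (Ici 0))
    (hiter : ∀ t > 0, Tendsto (fun k => φ^[k] t) atTop (nhds 0)) {t : ℝ} (ht : 0 ≤ t) :
    φ t ≤ t := by
  rcases ht.lt_or_eq with ht | rfl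
  · exact (hmono.apply_lt_self_of_tendsto_iterate hiter ht).le
  by_contra! h0
  exact (hmono.apply_lt_self_of_tendsto_iterate hiter h0).not_ge
    (hmono (mem_Ici.2 le_rfl) h0.le h0.le)

theorem iterate_nonneg_of_nonneg (hnonneg : ∀ t, 0 ≤ t → 0 ≤ φ t) {t : ℝ} (ht : 0 ≤ t)
    (p : ℕ) : 0 ≤ φ^[p] t := by
  induction p with
  | zero => exact ht
  | succ p ih => rw [Function.iterate_succ_apply']; exact hnonneg _ ih

theorem tendsto_iterate_of_nonneg (hmono : MonotoneOn φ (Ici 0))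
    (hnonneg : ∀ t, 0 ≤ t → 0 ≤ φ t)
    (hiter : ∀ t > 0, Tendsto (fun k => φ^[k] t) atTop (nhds 0)) {t : ℝ} (ht : 0 ≤ t) :
    Tendsto (fun k => φ^[k] t) atTop (nhds 0) := by
  rcases ht.lt_or_eq with ht | rfl
  · exact hiter t ht
  have hφ0 : φ 0 = 0 :=
    (hmono.apply_le_self_of_tendsto_iterate hiter le_rfl).antisymm (hnonneg 0 le_rfl)
  simp only [Function.iterate_fixed hφ0, tendsto_const_nhds]

theorem tendsto_zero_of_le_apply_of_forall_window_le (hmono : MonotoneOn φ (Ici 0))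
    (hnonneg : ∀ t, 0 ≤ t → 0 ≤ φ t)
    (hiter : ∀ t > 0, Tendsto (fun k => φ^[k] t) atTop (nhds 0)) {m : ℕ} {d : ℕ → ℝ}
    (hd : ∀ k, 0 ≤ d k)
    (hstep : ∀ k r, 0 ≤ r → (∀ j < m, d (k + j) ≤ r) → d (k + m) ≤ φ r) :
    Tendsto d atTop (nhds 0) := by
  set B := ∑ j ∈ Finset.range m, d j
  have hB : 0 ≤ B := Finset.sum_nonneg fun j _ => hd j
  have hle_B : ∀ k, d k ≤ B := by
    intro k
    induction k using Nat.strong_induction_on with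
    | _ k ih =>
      rcases lt_or_ge k m with hk | hk
      · exact Finset.single_le_sum (fun j _ => hd j) (Finset.mem_range.2 hk)
      obtain ⟨k, rfl⟩ := Nat.exists_eq_add_of_le' hk
      exact (hstep k B hB fun j hj => ih _ (by omega)).trans
        (hmono.apply_le_self_of_tendsto_iterate hiter hB)
  have hle_iterate : ∀ p k, p * m ≤ k → d k ≤ φ^[p] B := by
    intro p
    induction p with
    | zero => exact fun k _ => hle_B k
    | succ p ih =>
      intro k hk
      rw [Nat.succ_mul] at hk
      obtain ⟨k, rfl⟩ := Nat.exists_eq_add_of_le' (le_of_add_le_right hk)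
      rw [Function.iterate_succ_apply']
      exact hstep k _ (iterate_nonneg_of_nonneg hnonneg hB p) fun j hj => ih _ (by omega)
  refine tendsto_order.2 ⟨fun a ha => Eventually.of_forall fun k => ha.trans_le (hd k),
    fun a ha => ?_⟩
  obtain ⟨p, hp⟩ :=
    ((tendsto_iterate_of_nonneg hmono hnonneg hiter hB).eventually (gt_mem_nhds ha)).exists
  exact eventually_atTop.2 ⟨p * m, fun k hk => (hle_iterate p k hk).trans_lt hp⟩

end ComparisonFunction

theorem NonemptyCompacts.exists_dist_le_of_dist_le {X : Type*} [MetricSpace X]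
    {s t : NonemptyCompacts X} {r : ℝ} (h : dist s t ≤ r) {x : X} (hx : x ∈ s) :
    ∃ y ∈ t, dist x y ≤ r := by
  obtain ⟨y, hy, hxy⟩ := t.isCompact.exists_infDist_eq_dist t.nonempty x
  exact ⟨y, hy, hxy ▸ (infDist_le_hausdorffDist_of_mem hx (edist_ne_top s t)).trans h⟩

section ImagePi

variable {ι κ X Y : Type*} [Fintype ι] [PseudoMetricSpace Y] {φ : ℝ → ℝ}
  {f : κ → (ι → X) → Y} {r : ℝ}

theorem exists_mem_iUnion_image_pi_dist_le [PseudoMetricSpace X] (hmono : MonotoneOn φ (Ici 0))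
    (hf : ∀ i, ∀ x y : ι → X, dist (f i x) (f i y) ≤ φ (dist x y)) (hr : 0 ≤ r)
    {S T : ι → Set X} (hST : ∀ j, ∀ x ∈ S j, ∃ y ∈ T j, dist x y ≤ r) :
    ∀ x ∈ ⋃ i, f i '' pi univ S, ∃ y ∈ ⋃ i, f i '' pi univ T, dist x y ≤ φ r := by
  simp only [mem_iUnion, mem_image, mem_univ_pi]
  rintro - ⟨i, z, hz, rfl⟩
  choose w hwT hzw using fun j => hST j (z j) (hz j)
  exact ⟨f i w, ⟨i, w, hwT, rfl⟩,
    (hf i z w).trans (hmono dist_nonneg hr ((dist_pi_le_iff hr).2 hzw))⟩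

theorem hausdorffDist_iUnion_image_pi_le [MetricSpace X] (hmono : MonotoneOn φ (Ici 0))
    (hf : ∀ i, ∀ x y : ι → X, dist (f i x) (f i y) ≤ φ (dist x y)) (hr : 0 ≤ r)
    (hφr : 0 ≤ φ r) {S T : ι → NonemptyCompacts X} (hST : ∀ j, dist (S j) (T j) ≤ r) :
    hausdorffDist (⋃ i, f i '' pi univ fun j => (S j : Set X))
      (⋃ i, f i '' pi univ fun j => (T j : Set X)) ≤ φ r :=
  hausdorffDist_le_of_mem_dist hφr
    (exists_mem_iUnion_image_pi_dist_le hmono hf hr fun j _ hx =>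
      NonemptyCompacts.exists_dist_le_of_dist_le (hST j) hx)
    (exists_mem_iUnion_image_pi_dist_le hmono hf hr fun j _ hx =>
      NonemptyCompacts.exists_dist_le_of_dist_le ((dist_comm _ _).trans_le (hST j)) hx)

end ImagePi

theorem stmt4_general {X : Type*} [MetricSpace X]
    {n m : ℕ}
    (φ : ℝ → ℝ) (hφ_mono : MonotoneOn φ (Set.Ici 0))
    (hφ_nonneg : ∀ t, 0 ≤ t → 0 ≤ φ t)
    (hφ_iter : ∀ t > 0, Tendsto (fun k => φ^[k] t) atTop (nhds 0))
    (f : Fin n → (Fin m → X) → X)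
    (hf : ∀ i, ∀ x y : Fin m → X, dist (f i x) (f i y) ≤ φ (dist x y))
    (A : NonemptyCompacts X)
    (hA : (A : Set X) = ⋃ i, f i '' Set.pi Set.univ (fun _ : Fin m => (A : Set X)))
    (K : ℕ → NonemptyCompacts X)
    (hK : ∀ k, (K (k + m) : Set X) =
        ⋃ i, f i '' Set.pi Set.univ (fun j : Fin m => (K (k + j) : Set X))) :
    Tendsto K atTop (nhds A) := by
  have hstep : ∀ k r, 0 ≤ r → (∀ j < m, dist (K (k + j)) A ≤ r) →
      dist (K (k + m)) A ≤ φ r := by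
    intro k r hr hwindow
    rw [NonemptyCompacts.dist_eq, hK k, hA]
    exact hausdorffDist_iUnion_image_pi_le (T := fun _ => A) hφ_mono hf hr (hφ_nonneg r hr)
      fun j => hwindow j j.2
  exact tendsto_iff_dist_tendsto_zero.2 <| tendsto_zero_of_le_apply_of_forall_window_le
    hφ_mono hφ_nonneg hφ_iter (fun _ => dist_nonneg) hstep

/-- For a GIFS `F = {f₁,...,fₙ}` of order `m` with attractor `A`, any sequence of
nonempty compact sets satisfying `K_{k+m} = F(K_k, ..., K_{k+m-1})` converges to `A`
in the Hausdorff–Pompeiu metric. -/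
theorem stmt4 {X : Type*} [MetricSpace X] [CompleteSpace X]
    {n m : ℕ} (hn : 0 < n) (hm : 0 < m)
    (φ : ℝ → ℝ) (hφ_mono : MonotoneOn φ (Set.Ici 0))
    (hφ_nonneg : ∀ t, 0 ≤ t → 0 ≤ φ t)
    (hφ_iter : ∀ t > 0, Tendsto (fun k => φ^[k] t) atTop (nhds 0))
    (f : Fin n → (Fin m → X) → X)
    (hf : ∀ i, ∀ x y : Fin m → X, dist (f i x) (f i y) ≤ φ (dist x y))
    (A : NonemptyCompacts X)
    (hA : (A : Set X) = ⋃ i, f i '' Set.pi Set.univ (fun _ : Fin m => (A : Set X)))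
    (K : ℕ → NonemptyCompacts X)
    (hK : ∀ k, (K (k + m) : Set X) =
        ⋃ i, f i '' Set.pi Set.univ (fun j : Fin m => (K (k + j) : Set X))) :
    Tendsto K atTop (nhds A) :=
  stmt4_general φ hφ_mono hφ_nonneg hφ_iter f hf A hA K hK
end

section
/- Let F be a GIFS of order m on a complete metric space X with attractor A_F, all of whose maps share the witness function φ, and let c := max{Lip(f) : f ∈ F} < 1. If K₀ = ... = K_{m-1} = K for some nonempty compact K, and (K_k) is defined by K_{k+m} := F(K_k,...,K_{k+m-1}), then for every k ≥ 0, H(K_k, A_F) ≤ c^⌊k/m⌋ · H(K, A_F). -/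
/-!
The map `(D_j)_j ↦ ⋃ᵢ fᵢ(∏ⱼ D_j)` is `c`-Lipschitz for the Hausdorff edistance, with the maximum
over coordinates on the source: Lipschitz maps contract Hausdorff distances of images, and the
Hausdorff distance of products (resp. unions) is bounded by the largest one of the factors
(resp. pieces). Since `A` is a fixed point of this map, the distance from `K (k + m)` to `A` is at
most `c` times the largest distance from `K k, …, K (k + m - 1)` to `A`; as `c ≤ 1`, strong
induction on `k` yields the factor `c ^ (k / m)`.
-/

open TopologicalSpace Metric Set ENNReal

section HausdorffEDist

variable {X Y : Type*} [PseudoEMetricSpace X] [PseudoEMetricSpace Y]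

theorem LipschitzWith.infEDist_image_le {K : NNReal} {f : X → Y} (hf : LipschitzWith K f)
    {t : Set X} (ht : t.Nonempty) (x : X) : infEDist (f x) (f '' t) ≤ K * infEDist x t := by
  have : Nonempty t := ht.to_subtype
  calc infEDist (f x) (f '' t) ≤ ⨅ y : t, K * edist x y :=
        le_iInf fun y => (infEDist_le_edist_of_mem (mem_image_of_mem f y.2)).trans
          (hf.edist_le_mul x y)
    _ = K * infEDist x t := by
        rw [infEDist, iInf_subtype', ENNReal.mul_iInf fun h => absurd h coe_ne_top]

theorem LipschitzWith.hausdorffEDist_image_le {K : NNReal} {f : X → Y} (hf : LipschitzWith K f)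
    {s t : Set X} (hs : s.Nonempty) (ht : t.Nonempty) :
    hausdorffEDist (f '' s) (f '' t) ≤ K * hausdorffEDist s t := by
  refine hausdorffEDist_le_of_infEDist ?_ ?_ <;> rintro _ ⟨x, hx, rfl⟩
  · exact (hf.infEDist_image_le ht x).trans
      (mul_le_mul_right (infEDist_le_hausdorffEDist_of_mem hx) _)
  · rw [hausdorffEDist_comm]
    exact (hf.infEDist_image_le hs x).trans
      (mul_le_mul_right (infEDist_le_hausdorffEDist_of_mem hx) _)

variable {κ : Type*} [Fintype κ]

theorem infEDist_univ_pi_le (x : κ → X) (E : κ → Set X) :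
    infEDist x (univ.pi E) ≤ ⨆ j, infEDist (x j) (E j) := by
  refine le_of_forall_gt fun r hr => ?_
  have hlt : ∀ j, infEDist (x j) (E j) < r := fun j =>
    (le_iSup (fun j => infEDist (x j) (E j)) j).trans_lt hr
  choose y hyE hy using fun j => infEDist_lt_iff.1 (hlt j)
  refine infEDist_lt_iff.2 ⟨y, fun j _ => hyE j, ?_⟩
  rw [edist_pi_def, Finset.sup_lt_iff (bot_le.trans_lt hr)]
  exact fun j _ => hy j

theorem hausdorffEDist_univ_pi_le (D E : κ → Set X) :
    hausdorffEDist (univ.pi D) (univ.pi E) ≤ ⨆ j, hausdorffEDist (D j) (E j) := by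
  refine hausdorffEDist_le_of_infEDist ?_ ?_ <;> intro x hx <;>
    refine (infEDist_univ_pi_le x _).trans (iSup_mono fun j => ?_)
  · exact infEDist_le_hausdorffEDist_of_mem (hx j (mem_univ j))
  · rw [hausdorffEDist_comm]
    exact infEDist_le_hausdorffEDist_of_mem (hx j (mem_univ j))

theorem hausdorffEDist_iUnion_image_univ_pi_le {ι : Sort*} {f : ι → (κ → X) → X} {c : NNReal}
    (hf : ∀ i, LipschitzWith c (f i)) {D E : κ → Set X}
    (hD : ∀ j, (D j).Nonempty) (hE : ∀ j, (E j).Nonempty) :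
    hausdorffEDist (⋃ i, f i '' univ.pi D) (⋃ i, f i '' univ.pi E)
      ≤ c * ⨆ j, hausdorffEDist (D j) (E j) :=
  hausdorffEDist_iUnion_le.trans <| iSup_le fun i =>
    ((hf i).hausdorffEDist_image_le (univ_pi_nonempty_iff.2 hD)
      (univ_pi_nonempty_iff.2 hE)).trans (mul_le_mul_right (hausdorffEDist_univ_pi_le D E) _)

end HausdorffEDist

theorem ENNReal.le_pow_div_mul_of_le_mul_iSup {d : ℕ → ℝ≥0∞} {c B : ℝ≥0∞} {m : ℕ}
    (hm : 0 < m) (hc : c ≤ 1) (hinit : ∀ k < m, d k ≤ B)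
    (hstep : ∀ k, d (k + m) ≤ c * ⨆ j : Fin m, d (k + j)) :
    ∀ k, d k ≤ c ^ (k / m) * B := by
  intro k
  induction k using Nat.strong_induction_on with
  | _ k ih =>
    rcases lt_or_ge k m with hk | hk
    · simpa [Nat.div_eq_of_lt hk] using hinit k hk
    obtain ⟨k, rfl⟩ := Nat.exists_eq_add_of_le' hk
    have hprev : ∀ j : Fin m, d (k + j) ≤ c ^ (k / m) * B := fun j =>
      (ih _ (by omega)).trans <| mul_le_mul_left
        (pow_le_pow_of_le_one zero_le hc (Nat.div_le_div_right (Nat.le_add_right _ _))) _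
    calc d (k + m) ≤ c * ⨆ j : Fin m, d (k + j) := hstep k
      _ ≤ c * (c ^ (k / m) * B) := mul_le_mul_right (iSup_le hprev) _
      _ = c ^ ((k + m) / m) * B := by rw [Nat.add_div_right k hm, pow_succ']; ring

theorem stmt5_general {X : Type*} [MetricSpace X]
    {n m : ℕ} (hm : 0 < m)
    (f : Fin n → (Fin m → X) → X) (r : Fin n → NNReal)
    (hf : ∀ i, LipschitzWith (r i) (f i))
    (hc : Finset.univ.sup r < 1)
    (A : NonemptyCompacts X)
    (hA : (A : Set X) = ⋃ i, f i '' Set.pi Set.univ (fun _ : Fin m => (A : Set X)))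
    (K₀ : NonemptyCompacts X) (K : ℕ → NonemptyCompacts X)
    (hinit : ∀ j < m, K j = K₀)
    (hK : ∀ k, (K (k + m) : Set X) =
        ⋃ i, f i '' Set.pi Set.univ (fun j : Fin m => (K (k + j) : Set X))) :
    ∀ k, dist (K k) A ≤ ((Finset.univ.sup r : NNReal) : ℝ) ^ (k / m) * dist K₀ A := by
  set c := Finset.univ.sup r
  have hfc : ∀ i, LipschitzWith c (f i) := fun i =>
    (hf i).weaken (Finset.le_sup (Finset.mem_univ i))
  have hstep : ∀ k, edist (K (k + m)) A ≤ c * ⨆ j : Fin m, edist (K (k + j)) A := fun k => by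
    change hausdorffEDist (K (k + m) : Set X) A ≤ _
    rw [hK k, hA]
    exact hausdorffEDist_iUnion_image_univ_pi_le hfc (fun j => (K (k + j)).nonempty)
      fun _ => A.nonempty
  have hedist := ENNReal.le_pow_div_mul_of_le_mul_iSup hm (by exact_mod_cast hc.le)
    (fun k hk => (hinit k hk ▸ le_rfl : edist (K k) A ≤ edist K₀ A)) hstep
  intro k
  rw [← edist_le_ofReal (by positivity), ENNReal.ofReal_mul (by positivity), ← edist_dist,
    ENNReal.ofReal_pow NNReal.zero_le_coe, ENNReal.ofReal_coe_nnreal]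
  exact hedist k

/-- Speed of convergence for a GIFS of Lipschitz maps with `c := max Lip(fᵢ) < 1`:
if `K₀ = ... = K_{m-1} = K` and `K_{k+m} = F(K_k,...,K_{k+m-1})`, then
`H(K_k, A_F) ≤ c^⌊k/m⌋ · H(K, A_F)`. -/
theorem stmt5 {X : Type*} [MetricSpace X] [CompleteSpace X]
    {n m : ℕ} (hn : 0 < n) (hm : 0 < m)
    (f : Fin n → (Fin m → X) → X) (r : Fin n → NNReal)
    (hf : ∀ i, LipschitzWith (r i) (f i))
    (hc : Finset.univ.sup r < 1)
    (A : NonemptyCompacts X)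
    (hA : (A : Set X) = ⋃ i, f i '' Set.pi Set.univ (fun _ : Fin m => (A : Set X)))
    (K₀ : NonemptyCompacts X) (K : ℕ → NonemptyCompacts X)
    (hinit : ∀ j < m, K j = K₀)
    (hK : ∀ k, (K (k + m) : Set X) =
        ⋃ i, f i '' Set.pi Set.univ (fun j : Fin m => (K (k + j) : Set X))) :
    ∀ k, dist (K k) A ≤ ((Finset.univ.sup r : NNReal) : ℝ) ^ (k / m) * dist K₀ A :=
  stmt5_general hm f r hf hc A hA K₀ K hinit hK
end

section
/- Let F = {f₁,...,fₙ} be a GIFS of order m on a complete metric space X. Define the operator F̃ : K(X) → K(X) by F̃(K) := f₁(K × ... × K) ∪ ... ∪ fₙ(K × ... × K). Then F̃ is a Matkowski contraction on (K(X), H); in particular, for every nonempty compact K, the iterates F̃^k(K) converge to the attractor A_F in the Hausdorff metric. -/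
open TopologicalSpace Filter Metric

/-- The operator `F̃(K) := ⋃ i, fᵢ(K × ... × K)` associated to a GIFS is a Matkowski
contraction on the space of nonempty compact sets with the Hausdorff metric; in
particular its iterates starting from any nonempty compact set converge to the
attractor `A_F`. -/
theorem stmt6 {X : Type*} [MetricSpace X] [CompleteSpace X]
    {n m : ℕ} (hn : 0 < n)
    (φ : ℝ → ℝ) (hφ_mono : MonotoneOn φ (Set.Ici 0))
    (hφ_nonneg : ∀ t, 0 ≤ t → 0 ≤ φ t)
    (hφ_iter : ∀ t > 0, Tendsto (fun k => φ^[k] t) atTop (nhds 0))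
    (f : Fin n → (Fin m → X) → X)
    (hf : ∀ i, ∀ x y : Fin m → X, dist (f i x) (f i y) ≤ φ (dist x y))
    (T : NonemptyCompacts X → NonemptyCompacts X)
    (hT : ∀ K : NonemptyCompacts X,
      (T K : Set X) = ⋃ i, f i '' Set.pi Set.univ (fun _ : Fin m => (K : Set X)))
    (A : NonemptyCompacts X) (hA : T A = A) :
    (∃ ψ : ℝ → ℝ, MonotoneOn ψ (Set.Ici 0) ∧ (∀ t, 0 ≤ t → 0 ≤ ψ t) ∧
      (∀ t > 0, Tendsto (fun k => ψ^[k] t) atTop (nhds 0)) ∧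
      ∀ K L : NonemptyCompacts X, dist (T K) (T L) ≤ ψ (dist K L)) ∧
    ∀ K : NonemptyCompacts X, Tendsto (fun k => T^[k] K) atTop (nhds A) := by
  -- one-sided approximation lemma
  have key : ∀ K L : NonemptyCompacts X,
      ∀ x ∈ (T K : Set X), ∃ y ∈ (T L : Set X), dist x y ≤ φ (dist K L) := by
    intro K L x hx
    rw [hT K] at hx
    obtain ⟨i, a, ha, rfl⟩ := by simpa using hx
    have hne : EMetric.hausdorffEdist (K : Set X) (L : Set X) ≠ ⊤ :=
      hausdorffEdist_ne_top_of_nonempty_of_bounded K.nonempty L.nonempty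
        K.isCompact.isBounded L.isCompact.isBounded
    have hb : ∀ j : Fin m, ∃ y ∈ (L : Set X), dist (a j) y ≤ dist K L := by
      intro j
      obtain ⟨y, hy, hdy⟩ := L.isCompact.exists_infDist_eq_dist L.nonempty (a j)
      exact ⟨y, hy, by
        rw [← hdy, NonemptyCompacts.dist_eq]
        exact infDist_le_hausdorffDist_of_mem (ha j) hne⟩
    choose b hb hdb using hb
    refine ⟨f i b, ?_, ?_⟩
    · rw [hT L]
      exact Set.mem_iUnion.2 ⟨i, Set.mem_image_of_mem _ (fun j _ => hb j)⟩
    · have hd : dist a b ≤ dist K L := dist_pi_le_iff dist_nonneg |>.2 fun j => hdb j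
      exact le_trans (hf i a b) (hφ_mono dist_nonneg dist_nonneg hd)
  have contract : ∀ K L : NonemptyCompacts X, dist (T K) (T L) ≤ φ (dist K L) := by
    intro K L
    rw [NonemptyCompacts.dist_eq]
    refine hausdorffDist_le_of_mem_dist (hφ_nonneg _ dist_nonneg) (key K L) ?_
    intro y hy
    obtain ⟨x, hx, hxy⟩ := key L K y hy
    exact ⟨x, hx, by rw [dist_comm K L]; exact hxy⟩
  refine ⟨⟨φ, hφ_mono, hφ_nonneg, hφ_iter, contract⟩, ?_⟩
  intro K
  have hiter : ∀ k, dist (T^[k] K) A ≤ φ^[k] (dist K A) := by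
    intro k
    induction k with
    | zero => simp
    | succ k ih =>
      rw [Function.iterate_succ_apply', Function.iterate_succ_apply']
      calc dist (T (T^[k] K)) A = dist (T (T^[k] K)) (T A) := by rw [hA]
        _ ≤ φ (dist (T^[k] K) A) := contract _ _
        _ ≤ φ (φ^[k] (dist K A)) := hφ_mono dist_nonneg
            (le_trans dist_nonneg ih) ih
  rcases eq_or_lt_of_le (dist_nonneg : (0:ℝ) ≤ dist K A) with h0 | h0
  · have hKA : K = A := by
      have := dist_eq_zero.1 h0.symm; exact this
    subst hKA
    have : ∀ k, T^[k] K = K := by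
      intro k
      induction k with
      | zero => rfl
      | succ k ih => rw [Function.iterate_succ_apply', ih, hA]
    simp only [this]; exact tendsto_const_nhds
  · rw [tendsto_iff_dist_tendsto_zero]
    exact squeeze_zero (fun k => dist_nonneg) hiter (hφ_iter _ h0)
end

section
/- If c := max{Lip(f) : f ∈ F} < 1 for a GIFS F of order m, then the operator F̃(K) := ⋃ᵢ fᵢ(K × ... × K) on the space of nonempty compact subsets with the Hausdorff metric is Lipschitz with constant at most c. -/
/-!
The Hausdorff distance does not increase under finite unions (it is bounded by the largest
distance between corresponding pieces) or under finite products `K × ⋯ × K` with the maximum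
metric, and it is scaled by at most `Lip(f)` under the image of a Lipschitz map `f` of
nonempty sets. Applying these three facts to `⋃ i, fᵢ(K × ⋯ × K)` bounds the distance
`H(F̃ K, F̃ L)` by `max Lip(fᵢ) · H(K, L)`.
-/

open Set Metric ENNReal TopologicalSpace

namespace Metric

variable {ι : Type*} [Fintype ι] {π : ι → Type*} [∀ i, PseudoEMetricSpace (π i)]

theorem infEDist_pi (x : ∀ i, π i) (s : ∀ i, Set (π i)) :
    infEDist x (univ.pi s) = ⨆ i, infEDist (x i) (s i) := by
  refine le_antisymm (le_of_forall_gt fun d hd => ?_) ?_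
  · have hd_pos : 0 < d := lt_of_le_of_lt bot_le hd
    have hnear : ∀ i, ∃ y ∈ s i, edist (x i) y < d := fun i =>
      infEDist_lt_iff.1 ((le_iSup _ i).trans_lt hd)
    choose y hys hyd using hnear
    exact (infEDist_le_edist_of_mem (s := univ.pi s) fun i _ => hys i).trans_lt
      ((Finset.sup_lt_iff hd_pos).2 fun i _ => hyd i)
  · refine le_infEDist.2 fun y hy => iSup_le fun i => ?_
    exact (infEDist_le_edist_of_mem (hy i (mem_univ i))).trans (edist_le_pi_edist x y i)

theorem hausdorffEDist_pi_le (s t : ∀ i, Set (π i)) :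
    hausdorffEDist (univ.pi s) (univ.pi t) ≤ ⨆ i, hausdorffEDist (s i) (t i) := by
  refine hausdorffEDist_le_of_infEDist (fun x hx => ?_) (fun x hx => ?_) <;>
    rw [infEDist_pi] <;> refine iSup_mono fun i => ?_
  · exact infEDist_le_hausdorffEDist_of_mem (hx i (mem_univ i))
  · rw [hausdorffEDist_comm]
    exact infEDist_le_hausdorffEDist_of_mem (hx i (mem_univ i))

end Metric

namespace LipschitzWith

variable {α β : Type*} [PseudoEMetricSpace α] [PseudoEMetricSpace β]
  {K : NNReal} {f : α → β} {s t : Set α}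

theorem infEDist_image_le_s7 (hf : LipschitzWith K f) (x : α) (ht : t.Nonempty) :
    infEDist (f x) (f '' t) ≤ K * infEDist x t := by
  have := ht.to_subtype
  calc infEDist (f x) (f '' t) ≤ ⨅ y : t, K * edist x y :=
        le_iInf fun y => (infEDist_le_edist_of_mem (mem_image_of_mem f y.2)).trans (hf x y)
    _ = K * infEDist x t := by rw [infEDist, iInf_subtype', ENNReal.mul_iInf (by simp)]

theorem hausdorffEDist_image_le_s7 (hf : LipschitzWith K f) (hs : s.Nonempty) (ht : t.Nonempty) :
    hausdorffEDist (f '' s) (f '' t) ≤ K * hausdorffEDist s t := by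
  refine hausdorffEDist_le_of_infEDist ?_ ?_ <;> rintro _ ⟨x, hx, rfl⟩
  · exact (hf.infEDist_image_le_s7 x ht).trans
      (mul_le_mul_right (infEDist_le_hausdorffEDist_of_mem hx) _)
  · rw [hausdorffEDist_comm]
    exact (hf.infEDist_image_le_s7 x hs).trans
      (mul_le_mul_right (infEDist_le_hausdorffEDist_of_mem hx) _)

end LipschitzWith

theorem stmt7_general {X : Type*} [MetricSpace X]
    {n m : ℕ}
    (f : Fin n → (Fin m → X) → X) (r : Fin n → NNReal)
    (hf : ∀ i, LipschitzWith (r i) (f i))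
    (T : NonemptyCompacts X → NonemptyCompacts X)
    (hT : ∀ K : NonemptyCompacts X,
      (T K : Set X) = ⋃ i, f i '' Set.pi Set.univ (fun _ : Fin m => (K : Set X))) :
    LipschitzWith (Finset.univ.sup r) T := by
  intro K L
  set P : NonemptyCompacts X → Set (Fin m → X) := fun K => univ.pi fun _ => (K : Set X)
  have hP : ∀ K, (P K).Nonempty := fun K => univ_pi_nonempty_iff.2 fun _ => K.nonempty
  calc edist (T K) (T L) = hausdorffEDist (⋃ i, f i '' P K) (⋃ i, f i '' P L) := by
        rw [← hT, ← hT]; rfl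
    _ ≤ ⨆ i, hausdorffEDist (f i '' P K) (f i '' P L) := hausdorffEDist_iUnion_le
    _ ≤ ⨆ i, (r i : ℝ≥0∞) * hausdorffEDist (P K) (P L) :=
        iSup_mono fun i => (hf i).hausdorffEDist_image_le_s7 (hP K) (hP L)
    _ ≤ ⨆ _ : Fin n, ((Finset.univ.sup r : NNReal) : ℝ≥0∞) * edist K L :=
        iSup_mono fun i => mul_le_mul' (coe_le_coe.2 (Finset.le_sup (Finset.mem_univ i)))
          ((hausdorffEDist_pi_le _ _).trans (iSup_le fun _ => le_rfl))
    _ ≤ Finset.univ.sup r * edist K L := iSup_const_le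

/-- If `c := max Lip(fᵢ) < 1` for a GIFS of order `m`, then the operator
`F̃(K) := ⋃ i, fᵢ(K × ... × K)` on nonempty compact subsets with the Hausdorff
metric is Lipschitz with constant at most `c`. -/
theorem stmt7 {X : Type*} [MetricSpace X] [CompleteSpace X]
    {n m : ℕ} (hn : 0 < n)
    (f : Fin n → (Fin m → X) → X) (r : Fin n → NNReal)
    (hf : ∀ i, LipschitzWith (r i) (f i))
    (hc : Finset.univ.sup r < 1)
    (T : NonemptyCompacts X → NonemptyCompacts X)
    (hT : ∀ K : NonemptyCompacts X,
      (T K : Set X) = ⋃ i, f i '' Set.pi Set.univ (fun _ : Fin m => (K : Set X))) :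
    LipschitzWith (Finset.univ.sup r) T :=
  stmt7_general f r hf T hT
end

section
/- Let F be a GIFS of order m on a complete metric space X with attractor A_F. Then for every k ∈ ℕ, A_F = ⋃_{α ∈ ₖΩ} A_α, where A_α := f_α(A_F,k-fold product). -/
open TopologicalSpace Filter Metric

/-- The code space levels for a GIFS: `GifsCode n m k` represents `ₖ₊₁Ω`
(sequences `(α¹,...,α^{k+1})` with `α¹ ∈ {1,...,n}`, `α^{s+1} ∈ Ω_s^m`), in the
tree representation `ₖ₊₁Ω ≅ Ω₁ × (ₖΩ)^m`. -/
def GifsCode (n m : ℕ) : ℕ → Type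
  | 0 => Fin n
  | k + 1 => Fin n × (Fin m → GifsCode n m k)

/-- The iterated product spaces: `GifsSp X m k` represents `X_{k+1}`,
where `X_1 = X^m` and `X_{k+1} = X_k^m`. -/
def GifsSp (X : Type*) (m : ℕ) : ℕ → Type _
  | 0 => Fin m → X
  | k + 1 => Fin m → GifsSp X m k

/-- The iterated maps `f_α : X_{k+1} → X` for `α ∈ ₖ₊₁Ω`, defined by
`f_{(α¹,...,α^{k+1})}(x₁,...,x_m) = f_{α¹}(f_{α(1)}(x₁),...,f_{α(m)}(x_m))`. -/
def gifsIter {X : Type*} {n m : ℕ} (f : Fin n → (Fin m → X) → X) :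
    ∀ k, GifsCode n m k → GifsSp X m k → X
  | 0, a, x => f a x
  | k + 1, a, x => f a.1 (fun i => gifsIter f k (a.2 i) (x i))

/-- The iterated product sets `D_{k+1} ⊆ X_{k+1}`: `D_1 = D^m`, `D_{k+1} = D_k^m`. -/
def gifsProdSet {X : Type*} {m : ℕ} (D : Set X) : ∀ k, Set (GifsSp X m k)
  | 0 => Set.pi Set.univ (fun _ : Fin m => D)
  | k + 1 => Set.pi Set.univ (fun _ : Fin m => gifsProdSet D k)

theorem iUnion_image_gifsIter_succ {X : Type*} {n m : ℕ} (f : Fin n → (Fin m → X) → X)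
    (D : Set X) (k : ℕ) :
    ⋃ α : GifsCode n m (k + 1), gifsIter f (k + 1) α '' gifsProdSet D (k + 1) =
      ⋃ i, f i '' Set.pi Set.univ
        (fun _ : Fin m => ⋃ α : GifsCode n m k, gifsIter f k α '' gifsProdSet D k) := by
  ext y
  simp only [Set.mem_iUnion, Set.mem_image]
  constructor
  · rintro ⟨⟨i, α⟩, x, hx, rfl⟩
    refine ⟨i, fun j => gifsIter f k (α j) (x j), fun j _ => ?_, rfl⟩
    exact Set.mem_iUnion.2 ⟨α j, x j, hx j (Set.mem_univ j), rfl⟩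
  · rintro ⟨i, z, hz, rfl⟩
    have hz' : ∀ j, ∃ α : GifsCode n m k, ∃ x ∈ gifsProdSet D k, gifsIter f k α x = z j := by
      intro j
      simpa only [Set.mem_iUnion, Set.mem_image] using hz j (Set.mem_univ j)
    choose α x hx hαx using hz'
    exact ⟨(i, α), x, fun j _ => hx j, congrArg (f i) (funext hαx)⟩

theorem eq_iUnion_image_gifsIter {X : Type*} {n m : ℕ} {f : Fin n → (Fin m → X) → X}
    {D : Set X} (hD : D = ⋃ i, f i '' Set.pi Set.univ (fun _ : Fin m => D)) :
    ∀ k, D = ⋃ α : GifsCode n m k, gifsIter f k α '' gifsProdSet D k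
  | 0 => hD
  | k + 1 => by
    rw [iUnion_image_gifsIter_succ, ← eq_iUnion_image_gifsIter hD k]
    exact hD

/-- The index `k : ℕ` corresponds to the paper's level `k+1`. -/
theorem stmt9_general {X : Type*} [MetricSpace X]
    {n m : ℕ}
    (f : Fin n → (Fin m → X) → X)
    (A : NonemptyCompacts X)
    (hA : (A : Set X) = ⋃ i, f i '' Set.pi Set.univ (fun _ : Fin m => (A : Set X))) :
    ∀ k, (A : Set X) =
      ⋃ α : GifsCode n m k, gifsIter f k α '' gifsProdSet (A : Set X) k :=
  eq_iUnion_image_gifsIter hA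

/-- For a GIFS with attractor `A_F`, for every level `k` one has
`A_F = ⋃_{α ∈ ₖΩ} A_α` where `A_α = f_α((A_F)_k)`.
(The index `k : ℕ` corresponds to the paper's level `k+1`.) -/
theorem stmt9 {X : Type*} [MetricSpace X] [CompleteSpace X]
    {n m : ℕ} (hn : 0 < n)
    (φ : ℝ → ℝ) (hφ_mono : MonotoneOn φ (Set.Ici 0))
    (hφ_nonneg : ∀ t, 0 ≤ t → 0 ≤ φ t)
    (hφ_iter : ∀ t > 0, Tendsto (fun k => φ^[k] t) atTop (nhds 0))
    (f : Fin n → (Fin m → X) → X)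
    (hf : ∀ i, ∀ x y : Fin m → X, dist (f i x) (f i y) ≤ φ (dist x y))
    (A : NonemptyCompacts X)
    (hA : (A : Set X) = ⋃ i, f i '' Set.pi Set.univ (fun _ : Fin m => (A : Set X))) :
    ∀ k, (A : Set X) =
      ⋃ α : GifsCode n m k, gifsIter f k α '' gifsProdSet (A : Set X) k :=
  stmt9_general f A hA
end
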